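/- arXiv:2105.03722 — 8 statements merged into one kernel-verified Lean document; each statement's English description precedes it below -/
import Mathlib

section
/- The subspace 𝔥 spanned by the derivations Dⁱ(0) = tᵢ ∂/∂tᵢ for 1 ≤ i ≤ n is a maximal abelian subalgebra of the Witt algebra Der A. -/
/-!
Every element of `𝔥` acts diagonally on the monomials `t^s`, so `𝔥` is abelian. Conversely, a
derivation `y` commuting with every `tᵢ ∂/∂tᵢ` preserves their joint eigenspaces, which are the
lines `ℂ t^s` because the weights `s ↦ (sᵢ)ᵢ` separate monomials. Hence `y t^s = c(s) t^s`; the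
Leibniz rule makes `c` additive, so `c(s) = ∑ sᵢ c(eᵢ)` and `y = ∑ c(eᵢ) tᵢ ∂/∂tᵢ ∈ 𝔥`.
-/

/-- The Laurent polynomial algebra `A = ℂ[t₁^{±1},...,tₙ^{±1}]`. -/
abbrev LaurentAlg (n : ℕ) := AddMonoidAlgebra ℂ (Fin n → ℤ)

/-- The monomial `t^s` in `A`. -/
noncomputable def tmon {n : ℕ} (s : Fin n → ℤ) : LaurentAlg n := AddMonoidAlgebra.single s 1

theorem AddMonoidHom.apply_eq_sum_smul_single {ι M : Type*} [Fintype ι] [DecidableEq ι]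
    [AddCommGroup M] (f : (ι → ℤ) →+ M) (x : ι → ℤ) : f x = ∑ i, x i • f (Pi.single i 1) := by
  conv_lhs => rw [pi_eq_sum_univ' x]
  simp only [map_sum, map_zsmul]

namespace AddMonoidAlgebra

variable {R G : Type*} [CommSemiring R] [AddCommMonoid G]

theorem derivation_ext_single {M : Type*} [AddCommMonoid M] [Module R[G] M] [Module R M]
    {X Y : Derivation R R[G] M} (h : ∀ g, X (single g 1) = Y (single g 1)) : X = Y := by
  ext f
  induction f using induction_linear with
  | zero => simp
  | add f f' hf hf' => simp [hf, hf']
  | single g r => rw [← mul_one r, ← smul_single', X.map_smul, Y.map_smul, h]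

def IsDiagonal (X : Derivation R R[G] R[G]) (w : G → R) : Prop :=
  ∀ g, X (single g 1) = w g • single g 1

namespace IsDiagonal

variable {X Y : Derivation R R[G] R[G]} {w : G → R}

theorem coeff_apply (hX : IsDiagonal X w) (f : R[G]) (g : G) :
    (X f).coeff g = w g * f.coeff g := by
  classical
  induction f using induction_linear with
  | zero => simp
  | add f f' hf hf' => simp [coeff_add, hf, hf', mul_add]
  | single h r =>
    rw [← mul_one r, ← smul_single', X.map_smul, hX]
    by_cases hg : h = g
    · subst hg; simp [mul_comm]
    · simp [hg]

theorem map_add (hX : IsDiagonal X w) (g h : G) : w (g + h) = w g + w h := by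
  have key := X.leibniz (single g 1) (single h 1)
  rw [single_mul_single, one_mul, hX, hX, hX, smul_eq_mul, smul_eq_mul, mul_smul_comm,
    mul_smul_comm, single_mul_single, single_mul_single, add_comm h, ← add_smul,
    add_comm (w h)] at key
  simpa using congr(($key).coeff (g + h))

theorem eq (hX : IsDiagonal X w) (hY : IsDiagonal Y w) : X = Y :=
  derivation_ext_single fun g => by rw [hX, hY]

theorem sum {ι : Type*} (s : Finset ι) {X : ι → Derivation R R[G] R[G]} {w : ι → G → R}
    (c : ι → R) (hX : ∀ i ∈ s, IsDiagonal (X i) (w i)) :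
    IsDiagonal (∑ i ∈ s, c i • X i) fun g => ∑ i ∈ s, c i * w i g := by
  intro g
  rw [← Derivation.coeFnAddMonoidHom_apply, map_sum, Finset.sum_apply, Finset.sum_smul]
  refine Finset.sum_congr rfl fun i hi => ?_
  rw [Derivation.coeFnAddMonoidHom_apply, Derivation.smul_apply, hX i hi, smul_smul]

end IsDiagonal

section CommRing

variable {R G : Type*} [CommRing R] [AddCommMonoid G] {Y : Derivation R R[G] R[G]}

theorem IsDiagonal.lie_eq_zero {X : Derivation R R[G] R[G]} {w v : G → R} (hX : IsDiagonal X w)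
    (hY : IsDiagonal Y v) : ⁅X, Y⁆ = 0 :=
  derivation_ext_single fun g => by
    rw [Derivation.commutator_apply, hX, hY, X.map_smul, Y.map_smul, hX, hY, smul_smul,
      smul_smul, mul_comm, sub_self, Derivation.zero_apply]

theorem eq_single_of_forall_apply_eq_smul [NoZeroDivisors R] {ι : Type*}
    {X : ι → Derivation R R[G] R[G]} {w : ι → G → R} (hX : ∀ i, IsDiagonal (X i) (w i))
    (hw : Function.Injective fun g i => w i g) {g : G} {f : R[G]}
    (hf : ∀ i, X i f = w i g • f) : f = single g (f.coeff g) := by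
  classical
  ext h
  by_cases hhg : h = g
  · subst hhg; simp
  obtain ⟨i, hi⟩ : ∃ i, w i h ≠ w i g := by
    by_contra! hall
    exact hhg (hw (funext hall))
  have hcoeff := (hX i).coeff_apply f h
  rw [hf i, coeff_smul_apply, smul_eq_mul] at hcoeff
  have hzero : (w i h - w i g) * f.coeff h = 0 := by rw [sub_mul, hcoeff, sub_self]
  simp [(mul_eq_zero.mp hzero).resolve_left (sub_ne_zero.mpr hi), Ne.symm hhg]

theorem isDiagonal_of_forall_lie_eq_zero [NoZeroDivisors R] {ι : Type*}
    {X : ι → Derivation R R[G] R[G]} {w : ι → G → R} (hX : ∀ i, IsDiagonal (X i) (w i))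
    (hw : Function.Injective fun g i => w i g) (hY : ∀ i, ⁅X i, Y⁆ = 0) :
    IsDiagonal Y fun g => (Y (single g 1)).coeff g := by
  intro g
  rw [smul_single', mul_one]
  refine eq_single_of_forall_apply_eq_smul hX hw fun i => ?_
  have hcomm := congr(($(hY i)) (single g 1))
  rwa [Derivation.commutator_apply, Derivation.zero_apply, hX i, Y.map_smul, sub_eq_zero] at hcomm

theorem exists_eq_sum_smul_of_forall_lie_eq_zero [NoZeroDivisors R] [CharZero R] {ι : Type*}
    [Fintype ι] [DecidableEq ι] {E : ι → Derivation R R[ι → ℤ] R[ι → ℤ]}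
    (hE : ∀ i, IsDiagonal (E i) fun s => (s i : R)) {Y : Derivation R R[ι → ℤ] R[ι → ℤ]}
    (hY : ∀ i, ⁅E i, Y⁆ = 0) : ∃ c : ι → R, ∑ i, c i • E i = Y := by
  have hinj : Function.Injective fun (s : ι → ℤ) i => (s i : R) :=
    fun s t hst => funext fun i => Int.cast_injective (congr_fun hst i)
  have hYdiag := isDiagonal_of_forall_lie_eq_zero hE hinj hY
  set c := fun s => (Y (single s 1)).coeff s
  have hc : c = fun s => ∑ i, c (Pi.single i 1) * (s i : R) := funext fun s => by
    simpa [zsmul_eq_mul, mul_comm] using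
      (AddMonoidHom.mk' c hYdiag.map_add).apply_eq_sum_smul_single s
  rw [hc] at hYdiag
  exact ⟨_, (IsDiagonal.sum _ _ fun i _ => hE i).eq hYdiag⟩

end CommRing

end AddMonoidAlgebra

open AddMonoidAlgebra

/-- the span `𝔥` of the derivations `Dⁱ(0) = tᵢ ∂/∂tᵢ = D(eᵢ, 0)`
is a maximal abelian subalgebra of the Witt algebra `Der A`: it is abelian, and any
abelian Lie subalgebra of `Der A` containing it equals it. -/
theorem cartan_maximal_abelian (n : ℕ)
    (D : (Fin n → ℂ) → (Fin n → ℤ) → Derivation ℂ (LaurentAlg n) (LaurentAlg n))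
    (hD : ∀ (u : Fin n → ℂ) (r s : Fin n → ℤ),
      D u r (tmon s) = (∑ i, u i * (s i : ℂ)) • tmon (r + s))
    (𝔥 : Submodule ℂ (Derivation ℂ (LaurentAlg n) (LaurentAlg n)))
    (h𝔥 : 𝔥 = Submodule.span ℂ (Set.range fun i : Fin n => D (Pi.single i 1) 0)) :
    (∀ x ∈ 𝔥, ∀ y ∈ 𝔥, ⁅x, y⁆ = 0) ∧
      ∀ K : LieSubalgebra ℂ (Derivation ℂ (LaurentAlg n) (LaurentAlg n)),
        (∀ x ∈ K, ∀ y ∈ K, ⁅x, y⁆ = 0) → 𝔥 ≤ K.toSubmodule → K.toSubmodule = 𝔥 := by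
  subst h𝔥
  have hE : ∀ i, IsDiagonal (D (Pi.single i 1) 0) fun s => (s i : ℂ) := fun i s => by
    simpa [Pi.single_apply, tmon] using hD (Pi.single i 1) 0 s
  refine ⟨fun x hx y hy => ?_, fun K hK hle => le_antisymm (fun y hy => ?_) hle⟩
  · obtain ⟨a, rfl⟩ := (Submodule.mem_span_range_iff_exists_fun ℂ).mp hx
    obtain ⟨b, rfl⟩ := (Submodule.mem_span_range_iff_exists_fun ℂ).mp hy
    exact (IsDiagonal.sum _ a fun i _ => hE i).lie_eq_zero (IsDiagonal.sum _ b fun i _ => hE i)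
  · exact (Submodule.mem_span_range_iff_exists_fun ℂ).mpr <|
      exists_eq_sum_smul_of_forall_lie_eq_zero hE fun i =>
        hK _ (hle (Submodule.subset_span ⟨i, rfl⟩)) y hy
end

section
/- Let η : B → ℂ be a unital algebra homomorphism, V(μ,c) a finite-dimensional irreducible 𝔤𝔩ₙ-module, and F^α(μ,c) = V(μ,c) ⊗ A. Then the formulas D(u,r)b · (v ⊗ t^m) = η(b){(u, m+α) v ⊗ t^{m+r} + Σ_{i,j} uᵢ rⱼ (Eⱼᵢ v) ⊗ t^{m+r}} and t^r b · (v ⊗ t^m) = η(b) v ⊗ t^{m+r} define a module structure for the Lie algebra τ = (A ⋊ Der A) ⊗ B on F^α(μ,c). -/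
attribute [local instance 100] LieRing.ofAssociativeRing

/-!
On the summand `V ⊗ t^m`, `D(u,r)b` acts as `η b • t^r` composed with the endomorphism
`(u, m + α) • 1 + π(r uᵀ)` of `V` (`derivationAction`), since `∑ i j, uᵢ rⱼ Eⱼᵢ` is the
rank-one matrix `r uᵀ`. Rank-one matrices multiply as `(r uᵀ)(s vᵀ) = (u ⬝ᵥ s) r vᵀ`, so the
commutator of two such endomorphisms is computed in `𝔤𝔩ₙ` and transported by the Lie
homomorphism `π`, while the scalar parts only contribute the shifts
`(u, m + s + α) - (u, m + α) = u ⬝ᵥ s`. Every relation of `τ` thus reduces to an identity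
of endomorphisms of `V`, one summand at a time.
-/

open Finsupp

theorem lie_apply_single_of_shift {R M V : Type*} [Semiring R] [AddCommMonoid M]
    [AddCommGroup V] [Module R V] {X Y : Module.End R (M →₀ V)} {r s : M}
    {f g : M → Module.End R V}
    (hX : ∀ m v, X (single m v) = single (m + r) (f m v))
    (hY : ∀ m v, Y (single m v) = single (m + s) (g m v)) (m : M) (v : V) :
    ⁅X, Y⁆ (single m v) = single (m + (r + s)) ((f (m + s) * g m - g (m + r) * f m) v) := by
  rw [Ring.lie_def, LinearMap.sub_apply, Module.End.mul_apply, Module.End.mul_apply, hY, hX,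
    hX, hY, add_assoc, add_assoc, add_comm s r, LinearMap.sub_apply, Module.End.mul_apply,
    Module.End.mul_apply, single_sub]

theorem smul_mul_smul_sub_smul_mul_smul {R A : Type*} [CommSemiring R] [Ring A] [Algebra R A]
    (a b : R) (x y z w : A) :
    (a • x) * (b • y) - (b • z) * (a • w) = (a * b) • (x * y - z * w) := by
  rw [smul_mul_smul_comm, smul_mul_smul_comm, mul_comm b a, smul_sub]

theorem dotProduct_add_intCast_add {R ι : Type*} [CommRing R] [Fintype ι] (α w : ι → R)
    (m s : ι → ℤ) :
    w ⬝ᵥ (α + fun i => ((m + s) i : R))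
      = w ⬝ᵥ (α + fun i => (m i : R)) + w ⬝ᵥ fun i => (s i : R) := by
  rw [← dotProduct_add]
  congr 1
  ext i
  simp [add_assoc]

section DerivationAction

variable {R ι V : Type*} [CommRing R] [Fintype ι] [DecidableEq ι] [AddCommGroup V] [Module R V]
  (π : Matrix ι ι R →ₗ⁅R⁆ Module.End R V) (α : ι → R)

noncomputable def derivationAction (u : ι → R) (r m : ι → ℤ) : Module.End R V :=
  (u ⬝ᵥ (α + fun i => (m i : R))) • 1 + π (Matrix.vecMulVec (fun i => (r i : R)) u)

theorem derivationAction_add_sub (u : ι → R) (r m s : ι → ℤ) :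
    derivationAction π α u r (m + s) - derivationAction π α u r m
      = (u ⬝ᵥ fun i => (s i : R)) • 1 := by
  simp only [derivationAction, dotProduct_add_intCast_add, add_smul]
  abel

theorem derivationAction_commutator (u v : ι → R) (r s m : ι → ℤ) :
    derivationAction π α u r (m + s) * derivationAction π α v s m
        - derivationAction π α v s (m + r) * derivationAction π α u r m
      = derivationAction π α
          ((u ⬝ᵥ fun i => (s i : R)) • v - (v ⬝ᵥ fun i => (r i : R)) • u) (r + s) m := by
  have hcast : (fun i => ((r + s) i : R)) = (fun i => (r i : R)) + fun i => (s i : R) := by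
    ext i; simp
  simp only [derivationAction, dotProduct_add_intCast_add, hcast]
  set r' : ι → R := fun i => (r i : R)
  set s' : ι → R := fun i => (s i : R)
  have hlie : π (Matrix.vecMulVec r' u) * π (Matrix.vecMulVec s' v)
      = π (Matrix.vecMulVec s' v) * π (Matrix.vecMulVec r' u)
        + ((u ⬝ᵥ s') • π (Matrix.vecMulVec r' v)
          - (v ⬝ᵥ r') • π (Matrix.vecMulVec s' u)) := by
    rw [← sub_eq_iff_eq_add', ← Ring.lie_def, ← π.map_lie, Ring.lie_def,
      Matrix.vecMulVec_mul_vecMulVec, Matrix.vecMulVec_mul_vecMulVec, Matrix.vecMulVec_smul,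
      Matrix.vecMulVec_smul, map_sub, map_smul, map_smul]
  simp only [Matrix.add_vecMulVec, Matrix.vecMulVec_sub, Matrix.vecMulVec_smul, sub_dotProduct,
    smul_dotProduct, smul_eq_mul, map_add, map_sub, map_smul, add_mul, mul_add, smul_mul_assoc,
    mul_smul_comm, one_mul, mul_one, hlie]
  module

theorem derivationAction_apply (u : ι → R) (r m : ι → ℤ) (v : V) :
    derivationAction π α u r m v = (∑ i, u i * (α i + (m i : R))) • v
      + ∑ i, ∑ j, (u i * (r j : R)) • π (Matrix.single j i 1) v := by
  have hmat : Matrix.vecMulVec (fun i => (r i : R)) u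
      = ∑ i, ∑ j, (u i * (r j : R)) • Matrix.single j i (1 : R) := by
    rw [Matrix.matrix_eq_sum_single (Matrix.vecMulVec _ u), Finset.sum_comm]
    simp only [Matrix.vecMulVec_apply, Matrix.smul_single, smul_eq_mul, mul_one, mul_comm]
  rw [derivationAction, hmat, ← LieHom.coe_toLinearMap]
  simp only [map_sum, map_smul, LinearMap.add_apply, LinearMap.smul_apply, LinearMap.sum_apply,
    Module.End.one_apply, dotProduct, Pi.add_apply]

end DerivationAction

theorem tensor_field_module_structure_general (n : ℕ) (B : Type*) [CommRing B] [Algebra ℂ B]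
    (η : B →ₐ[ℂ] ℂ)
    (V : Type*) [AddCommGroup V] [Module ℂ V]
    (π : Matrix (Fin n) (Fin n) ℂ →ₗ⁅ℂ⁆ Module.End ℂ V)
    (α : Fin n → ℂ)
    (Dop : (Fin n → ℂ) → (Fin n → ℤ) → B → Module.End ℂ ((Fin n → ℤ) →₀ V))
    (Top : (Fin n → ℤ) → B → Module.End ℂ ((Fin n → ℤ) →₀ V))
    (hDop : ∀ (u : Fin n → ℂ) (r : Fin n → ℤ) (b : B) (m : Fin n → ℤ) (v : V),
      Dop u r b (Finsupp.single m v) =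
        η b • Finsupp.single (m + r)
          ((∑ i, u i * (α i + (m i : ℂ))) • v +
            ∑ i, ∑ j, (u i * (r j : ℂ)) • π (Matrix.single j i 1) v))
    (hTop : ∀ (r : Fin n → ℤ) (b : B) (m : Fin n → ℤ) (v : V),
      Top r b (Finsupp.single m v) = η b • Finsupp.single (m + r) v) :
    (∀ (u v : Fin n → ℂ) (r s : Fin n → ℤ) (b b' : B),
      ⁅Dop u r b, Dop v s b'⁆ =
        Dop ((∑ i, u i * (s i : ℂ)) • v - (∑ i, v i * (r i : ℂ)) • u) (r + s) (b * b')) ∧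
    (∀ (u : Fin n → ℂ) (r s : Fin n → ℤ) (b b' : B),
      ⁅Dop u r b, Top s b'⁆ = (∑ i, u i * (s i : ℂ)) • Top (r + s) (b * b')) ∧
    (∀ (r s : Fin n → ℤ) (b b' : B), ⁅Top r b, Top s b'⁆ = 0) := by
  have hD : ∀ u r b m v, Dop u r b (single m v)
      = single (m + r) ((η b • derivationAction π α u r m) v) := by
    intro u r b m v
    rw [hDop, ← derivationAction_apply, smul_single]; rfl
  have hT : ∀ r b m v,
      Top r b (single m v) = single (m + r) ((η b • 1 : Module.End ℂ V) v) := by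
    intro r b m v
    rw [hTop, smul_single]; rfl
  refine ⟨fun u v r s b b' => lhom_ext fun m w => ?_, fun u r s b b' => lhom_ext fun m w => ?_,
    fun r s b b' => lhom_ext fun m w => ?_⟩
  · rw [lie_apply_single_of_shift (hD u r b) (hD v s b'), hD, smul_mul_smul_sub_smul_mul_smul,
      derivationAction_commutator, map_mul]
    rfl
  · rw [lie_apply_single_of_shift (hD u r b) (hT s b'), LinearMap.smul_apply, hT,
      smul_mul_smul_sub_smul_mul_smul, mul_one, one_mul, derivationAction_add_sub, map_mul,
      smul_single, smul_comm]
    rfl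
  · rw [lie_apply_single_of_shift (hT r b) (hT s b'), smul_mul_smul_sub_smul_mul_smul, sub_self,
      smul_zero, LinearMap.zero_apply, single_zero, LinearMap.zero_apply]

/-- Let `η : B → ℂ` be a unital algebra homomorphism, `V = V(μ,c)` a
finite-dimensional irreducible `𝔤𝔩ₙ`-module (with action `π`), and `F^α(μ,c) = V ⊗ A`,
realized as finitely supported functions `ℤⁿ →₀ V` (with `v ⊗ t^m = single m v`).
Then the formulas
`D(u,r)b · (v ⊗ t^m) = η(b){(u, m+α) v ⊗ t^{m+r} + Σ_{i,j} uᵢ rⱼ (Eⱼᵢ v) ⊗ t^{m+r}}` and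
`t^r b · (v ⊗ t^m) = η(b) v ⊗ t^{m+r}`
define a module structure for `τ = (A ⋊ Der A) ⊗ B`: the resulting operators satisfy the
defining commutator relations of `τ`. -/
theorem tensor_field_module_structure (n : ℕ) (B : Type*) [CommRing B] [Algebra ℂ B]
    (η : B →ₐ[ℂ] ℂ)
    (V : Type*) [AddCommGroup V] [Module ℂ V] [FiniteDimensional ℂ V] [Nontrivial V]
    (π : Matrix (Fin n) (Fin n) ℂ →ₗ⁅ℂ⁆ Module.End ℂ V)
    (hirr : ∀ W : Submodule ℂ V, (∀ x : Matrix (Fin n) (Fin n) ℂ, ∀ v ∈ W, π x v ∈ W) →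
      W = ⊥ ∨ W = ⊤)
    (α : Fin n → ℂ)
    (Dop : (Fin n → ℂ) → (Fin n → ℤ) → B → Module.End ℂ ((Fin n → ℤ) →₀ V))
    (Top : (Fin n → ℤ) → B → Module.End ℂ ((Fin n → ℤ) →₀ V))
    (hDop : ∀ (u : Fin n → ℂ) (r : Fin n → ℤ) (b : B) (m : Fin n → ℤ) (v : V),
      Dop u r b (Finsupp.single m v) =
        η b • Finsupp.single (m + r)
          ((∑ i, u i * (α i + (m i : ℂ))) • v +
            ∑ i, ∑ j, (u i * (r j : ℂ)) • π (Matrix.single j i 1) v))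
    (hTop : ∀ (r : Fin n → ℤ) (b : B) (m : Fin n → ℤ) (v : V),
      Top r b (Finsupp.single m v) = η b • Finsupp.single (m + r) v) :
    (∀ (u v : Fin n → ℂ) (r s : Fin n → ℤ) (b b' : B),
      ⁅Dop u r b, Dop v s b'⁆ =
        Dop ((∑ i, u i * (s i : ℂ)) • v - (∑ i, v i * (r i : ℂ)) • u) (r + s) (b * b')) ∧
    (∀ (u : Fin n → ℂ) (r s : Fin n → ℤ) (b b' : B),
      ⁅Dop u r b, Top s b'⁆ = (∑ i, u i * (s i : ℂ)) • Top (r + s) (b * b')) ∧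
    (∀ (r s : Fin n → ℤ) (b b' : B), ⁅Top r b, Top s b'⁆ = 0) :=
  tensor_field_module_structure_general n B η V π α Dop Top hDop hTop
end

section
/- In the quotient U/L of the universal enveloping algebra of τ = (A ⋊ Der A) ⊗ B by the ideal L generated by t^r b · t^s b' − t^{r+s} bb' and t^0 ⊗ 1 − 1, the elements T(u,r,b₁,b₂) = t^{−r} b₁ · D(u,r) b₂ satisfy [T(u,r,b₁,b₂), T(v,s,b₃,b₄)] = T(w, r+s, b₁b₃, b₂b₄) − (u,s) T(v,s, b₁b₂b₃, b₄) + (v,r) T(u,r, b₁b₃b₄, b₂), where w = (u,s)v − (v,r)u. In particular their span D is a Lie algebra. -/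
/-!
Commuting `D(u,r) b₂` past `t^{-s} b₃` and `D(v,s) b₄` past `t^{-r} b₁` costs one multiple of a
`t`-element each, by `[D(u,r) b, t^s b'] = (u,s) t^{r+s} bb'`. Since the `t`-elements commute and
multiply like monomials modulo `L`, the bracket becomes `t^{-(r+s)} b₁b₃ · [D(u,r) b₂, D(v,s) b₄]`
plus these two correction terms, which are again of the form `T`. The commutator is bilinear, so
closedness of the span only has to be checked on the spanning elements.
-/

theorem Submodule.mul_sub_mul_mem_span {K R : Type*} [CommRing K] [Ring R] [Algebra K R]
    {s : Set R} (hs : ∀ x ∈ s, ∀ y ∈ s, x * y - y * x ∈ span K s)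
    {x y : R} (hx : x ∈ span K s) (hy : y ∈ span K s) :
    x * y - y * x ∈ span K s := by
  let commutator : R →ₗ[K] R →ₗ[K] R := LinearMap.mul K R - (LinearMap.mul K R).flip
  have hspan : map₂ commutator (span K s) (span K s) ≤ span K s := by
    rw [map₂_span_span, span_le]
    rintro _ ⟨a, ha, b, hb, rfl⟩
    exact hs a ha b hb
  exact hspan (apply_mem_map₂ commutator hx hy)

theorem mul_mul_sub_mul_mul_of_commute {R : Type*} [Ring R] {a b x y p q : R}
    (hab : Commute a b) (hxb : x * b = b * x + p) (hya : y * a = a * y + q) :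
    a * x * (b * y) - b * y * (a * x) = a * b * (x * y - y * x) + a * p * y - b * q * x := by
  calc a * x * (b * y) - b * y * (a * x) = a * (x * b) * y - b * (y * a) * x := by noncomm_ring
    _ = a * b * (x * y) + a * p * y - b * a * (y * x) - b * q * x := by
      rw [hxb, hya]; noncomm_ring
    _ = _ := by rw [hab.eq]; noncomm_ring

section TD

variable {K Γ V B R : Type*} [CommRing K] [AddCommGroup Γ] [AddCommGroup V] [Module K V]
  [CommRing B] [Ring R] [Algebra K R] {pair : V → Γ →+ K} {Tt : Γ → B → R} {Dd : V → Γ → B → R}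

theorem T_commutator (hTT : ∀ r s b b', Tt r b * Tt s b' = Tt (r + s) (b * b'))
    (hDT : ∀ u r s b b',
      Dd u r b * Tt s b' - Tt s b' * Dd u r b = pair u s • Tt (r + s) (b * b'))
    (hDD : ∀ u v r s b b', Dd u r b * Dd v s b' - Dd v s b' * Dd u r b =
      Dd (pair u s • v - pair v r • u) (r + s) (b * b'))
    (T : V → Γ → B → B → R) (hT : ∀ u r b₁ b₂, T u r b₁ b₂ = Tt (-r) b₁ * Dd u r b₂)
    (u v : V) (r s : Γ) (b₁ b₂ b₃ b₄ : B) :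
    T u r b₁ b₂ * T v s b₃ b₄ - T v s b₃ b₄ * T u r b₁ b₂ =
      T (pair u s • v - pair v r • u) (r + s) (b₁ * b₃) (b₂ * b₄)
        - pair u s • T v s (b₁ * b₂ * b₃) b₄ + pair v r • T u r (b₁ * b₃ * b₄) b₂ := by
  have hTcomm : Commute (Tt (-r) b₁) (Tt (-s) b₃) := by
    rw [Commute, SemiconjBy, hTT, hTT, add_comm, mul_comm]
  simp only [hT]
  rw [mul_mul_sub_mul_mul_of_commute hTcomm (sub_eq_iff_eq_add'.mp (hDT u r (-s) b₂ b₃))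
    (sub_eq_iff_eq_add'.mp (hDT v s (-r) b₄ b₁))]
  simp only [hDD, hTT, map_neg, neg_smul, mul_neg, neg_mul, mul_smul_comm, smul_mul_assoc,
    neg_add_cancel_left, ← neg_add]
  rw [← mul_assoc b₁, show b₃ * (b₄ * b₁) = b₁ * b₃ * b₄ by ring]
  abel

end TD

def stdPairing (n : ℕ) (u : Fin n → ℂ) : (Fin n → ℤ) →+ ℂ where
  toFun s := ∑ i, u i * (s i : ℂ)
  map_zero' := by simp
  map_add' s s' := by simp [mul_add, Finset.sum_add_distrib]

theorem UmodL_T_bracket_general (n : ℕ) (B : Type*) [CommRing B]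
    (R : Type*) [Ring R] [Algebra ℂ R]
    (Tt : (Fin n → ℤ) → B → R) (Dd : (Fin n → ℂ) → (Fin n → ℤ) → B → R)
    (hTT : ∀ (r s : Fin n → ℤ) (b b' : B), Tt r b * Tt s b' = Tt (r + s) (b * b'))
    (hDT : ∀ (u : Fin n → ℂ) (r s : Fin n → ℤ) (b b' : B),
      Dd u r b * Tt s b' - Tt s b' * Dd u r b = (∑ i, u i * (s i : ℂ)) • Tt (r + s) (b * b'))
    (hDD : ∀ (u v : Fin n → ℂ) (r s : Fin n → ℤ) (b b' : B),
      Dd u r b * Dd v s b' - Dd v s b' * Dd u r b =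
        Dd ((∑ i, u i * (s i : ℂ)) • v - (∑ i, v i * (r i : ℂ)) • u) (r + s) (b * b'))
    (T : (Fin n → ℂ) → (Fin n → ℤ) → B → B → R)
    (hT : ∀ u r b₁ b₂, T u r b₁ b₂ = Tt (-r) b₁ * Dd u r b₂) :
    (∀ (u v : Fin n → ℂ) (r s : Fin n → ℤ) (b₁ b₂ b₃ b₄ : B),
      T u r b₁ b₂ * T v s b₃ b₄ - T v s b₃ b₄ * T u r b₁ b₂ =
        T ((∑ i, u i * (s i : ℂ)) • v - (∑ i, v i * (r i : ℂ)) • u) (r + s) (b₁ * b₃) (b₂ * b₄)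
          - (∑ i, u i * (s i : ℂ)) • T v s (b₁ * b₂ * b₃) b₄
          + (∑ i, v i * (r i : ℂ)) • T u r (b₁ * b₃ * b₄) b₂) ∧
    (∀ x ∈ Submodule.span ℂ {z : R | ∃ u r b₁ b₂, z = T u r b₁ b₂},
     ∀ y ∈ Submodule.span ℂ {z : R | ∃ u r b₁ b₂, z = T u r b₁ b₂},
      x * y - y * x ∈ Submodule.span ℂ {z : R | ∃ u r b₁ b₂, z = T u r b₁ b₂}) := by
  have hbracket := T_commutator (pair := stdPairing n) hTT hDT hDD T hT
  refine ⟨hbracket, fun x hx y hy => Submodule.mul_sub_mul_mem_span ?_ hx hy⟩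
  rintro _ ⟨u, r, b₁, b₂, rfl⟩ _ ⟨v, s, b₃, b₄, rfl⟩
  rw [hbracket]
  exact add_mem (sub_mem (Submodule.subset_span ⟨_, _, _, _, rfl⟩)
      (Submodule.smul_mem _ _ (Submodule.subset_span ⟨_, _, _, _, rfl⟩)))
    (Submodule.smul_mem _ _ (Submodule.subset_span ⟨_, _, _, _, rfl⟩))

/-- In the quotient `U/L` of the universal enveloping algebra of
`τ = (A ⋊ Der A) ⊗ B` by the ideal `L` generated by `t^r b · t^s b' − t^{r+s} bb'` and
`t^0 ⊗ 1 − 1` (modeled here as an associative unital `ℂ`-algebra `R` generated by elements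
`Tt r b` (the images of `t^r ⊗ b`) and `Dd u r b` (the images of `D(u,r) ⊗ b`) subject to
the commutation relations of `τ` and the relations of `L`), the elements
`T(u,r,b₁,b₂) = t^{−r} b₁ · D(u,r) b₂` satisfy
`[T(u,r,b₁,b₂), T(v,s,b₃,b₄)] = T(w, r+s, b₁b₃, b₂b₄) − (u,s) T(v,s, b₁b₂b₃, b₄)
  + (v,r) T(u,r, b₁b₃b₄, b₂)` with `w = (u,s)v − (v,r)u`.
In particular their span `D` is closed under the commutator bracket, i.e. a Lie algebra. -/
theorem UmodL_T_bracket (n : ℕ) (B : Type*) [CommRing B] [Algebra ℂ B]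
    (R : Type*) [Ring R] [Algebra ℂ R]
    (Tt : (Fin n → ℤ) → B → R) (Dd : (Fin n → ℂ) → (Fin n → ℤ) → B → R)
    (hTlin : ∀ r, IsLinearMap ℂ (Tt r)) (hDlin : ∀ u r, IsLinearMap ℂ (Dd u r))
    (hDadd : ∀ u u' r b, Dd (u + u') r b = Dd u r b + Dd u' r b)
    (hDsmul : ∀ (c : ℂ) u r b, Dd (c • u) r b = c • Dd u r b)
    (hTT : ∀ (r s : Fin n → ℤ) (b b' : B), Tt r b * Tt s b' = Tt (r + s) (b * b'))
    (hT1 : Tt 0 1 = 1)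
    (hDT : ∀ (u : Fin n → ℂ) (r s : Fin n → ℤ) (b b' : B),
      Dd u r b * Tt s b' - Tt s b' * Dd u r b = (∑ i, u i * (s i : ℂ)) • Tt (r + s) (b * b'))
    (hDD : ∀ (u v : Fin n → ℂ) (r s : Fin n → ℤ) (b b' : B),
      Dd u r b * Dd v s b' - Dd v s b' * Dd u r b =
        Dd ((∑ i, u i * (s i : ℂ)) • v - (∑ i, v i * (r i : ℂ)) • u) (r + s) (b * b'))
    (T : (Fin n → ℂ) → (Fin n → ℤ) → B → B → R)
    (hT : ∀ u r b₁ b₂, T u r b₁ b₂ = Tt (-r) b₁ * Dd u r b₂) :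
    (∀ (u v : Fin n → ℂ) (r s : Fin n → ℤ) (b₁ b₂ b₃ b₄ : B),
      T u r b₁ b₂ * T v s b₃ b₄ - T v s b₃ b₄ * T u r b₁ b₂ =
        T ((∑ i, u i * (s i : ℂ)) • v - (∑ i, v i * (r i : ℂ)) • u) (r + s) (b₁ * b₃) (b₂ * b₄)
          - (∑ i, u i * (s i : ℂ)) • T v s (b₁ * b₂ * b₃) b₄
          + (∑ i, v i * (r i : ℂ)) • T u r (b₁ * b₃ * b₄) b₂) ∧
    (∀ x ∈ Submodule.span ℂ {z : R | ∃ u r b₁ b₂, z = T u r b₁ b₂},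
     ∀ y ∈ Submodule.span ℂ {z : R | ∃ u r b₁ b₂, z = T u r b₁ b₂},
      x * y - y * x ∈ Submodule.span ℂ {z : R | ∃ u r b₁ b₂, z = T u r b₁ b₂}) :=
  UmodL_T_bracket_general n B R Tt Dd hTT hDT hDD T hT
end

section
/- In the Lie algebra Der A ⊗ B, the elements I(u,r,b₁,b₂) = ψ(b₁) D(u,r) ⊗ b₂ − D(u,0) ⊗ b₁b₂, where ψ : B → ℂ is a unital algebra homomorphism, satisfy [I(u,r,b₁,b₂), I(v,s,b₃,b₄)] = I(w, r+s, b₁b₃, b₂b₄) − (u,s) I(v,s, b₃, b₁b₂b₄) + (v,r) I(u,r, b₁, b₂b₃b₄), where w = (u,s)v − (v,r)u; hence their span D₂ is a Lie subalgebra of Der A ⊗ B. -/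
/-!
The derivations `D(u,r)` obey the Witt relations `[D(u,r), D(v,s)] = D((u,s)v - (v,r)u, r+s)` and
are linear in `u`; in particular `D(u,0)` acts on `D(v,s)` by the scalar `(u,s)`. Expanding
`[I(u,r,b₁,b₂), I(v,s,b₃,b₄)]` bilinearly in `Der A ⊗ B` gives four terms, and with these relations
they regroup into the three `I`'s of the right-hand side. Closure of the span under the bracket then
follows from bilinearity.
-/

open scoped TensorProduct

local notation "⟪" u ", " s "⟫" => ∑ i, u i * ((s i : ℤ) : ℂ)

theorem lie_mem_span_of_forall_lie_mem {R L : Type*} [CommRing R] [LieRing L] [LieAlgebra R L]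
    {S : Set L} (hS : ∀ x ∈ S, ∀ y ∈ S, ⁅x, y⁆ ∈ Submodule.span R S) {x y : L}
    (hx : x ∈ Submodule.span R S) (hy : y ∈ Submodule.span R S) :
    ⁅x, y⁆ ∈ Submodule.span R S := by
  have hxy := Submodule.apply_mem_map₂ (LieModule.toEnd R L L : L →ₗ[R] Module.End R L) hx hy
  rw [Submodule.map₂_span_span] at hxy
  refine Submodule.span_le.2 ?_ hxy
  rintro _ ⟨a, ha, b, hb, rfl⟩
  exact hS a ha b hb

section WittRelations

variable {n : ℕ} {L : Type*} [LieRing L] [LieAlgebra ℂ L]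

structure IsWittFamily (D : (Fin n → ℂ) → (Fin n → ℤ) → L) : Prop where
  lie_eq : ∀ u v r s, ⁅D u r, D v s⁆ = D (⟪u, s⟫ • v - ⟪v, r⟫ • u) (r + s)
  isLinearMap : ∀ r, IsLinearMap ℂ (D · r)

variable {D : (Fin n → ℂ) → (Fin n → ℤ) → L}

namespace IsWittFamily

theorem lie_zero_left (hD : IsWittFamily D) (u v : Fin n → ℂ) (s : Fin n → ℤ) :
    ⁅D u 0, D v s⁆ = ⟪u, s⟫ • D v s := by
  simp [hD.lie_eq, (hD.isLinearMap s).map_smul]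

theorem lie_zero_right (hD : IsWittFamily D) (u v : Fin n → ℂ) (r : Fin n → ℤ) :
    ⁅D u r, D v 0⁆ = -(⟪v, r⟫ • D u r) := by
  rw [← lie_skew, hD.lie_zero_left]

end IsWittFamily

variable {B : Type*} [CommRing B] [Algebra ℂ B]

noncomputable def loopI (ψ : B →ₐ[ℂ] ℂ) (D : (Fin n → ℂ) → (Fin n → ℤ) → L)
    (u : Fin n → ℂ) (r : Fin n → ℤ) (b₁ b₂ : B) : B ⊗[ℂ] L :=
  ψ b₁ • (b₂ ⊗ₜ D u r) - (b₁ * b₂) ⊗ₜ D u 0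

theorem IsWittFamily.lie_loopI (hD : IsWittFamily D) (ψ : B →ₐ[ℂ] ℂ)
    (u v : Fin n → ℂ) (r s : Fin n → ℤ) (b₁ b₂ b₃ b₄ : B) :
    ⁅loopI ψ D u r b₁ b₂, loopI ψ D v s b₃ b₄⁆ =
      loopI ψ D (⟪u, s⟫ • v - ⟪v, r⟫ • u) (r + s) (b₁ * b₃) (b₂ * b₄)
        - ⟪u, s⟫ • loopI ψ D v s b₃ (b₁ * b₂ * b₄)
        + ⟪v, r⟫ • loopI ψ D u r b₁ (b₂ * b₃ * b₄) := by
  simp only [loopI, sub_lie, lie_sub, smul_lie, lie_smul, LieAlgebra.ExtendScalars.bracket_tmul,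
    hD.lie_eq u v r s, hD.lie_zero_left, hD.lie_zero_right, (hD.isLinearMap 0).map_sub,
    (hD.isLinearMap 0).map_smul, map_mul]
  simp only [TensorProduct.tmul_sub, TensorProduct.tmul_smul, TensorProduct.tmul_neg,
    Pi.zero_apply, Int.cast_zero, mul_zero, Finset.sum_const_zero, zero_smul, TensorProduct.tmul_zero]
  -- normalize the products in `B`, so that `module` sees equal tensor factors as equal atoms
  simp only [mul_comm, mul_left_comm]
  module

end WittRelations

section LaurentDerivations

variable {n : ℕ}

theorem Derivation.ext_tmon {D₁ D₂ : Derivation ℂ (LaurentAlg n) (LaurentAlg n)}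
    (h : ∀ s, D₁ (tmon s) = D₂ (tmon s)) : D₁ = D₂ := by
  have : (D₁ : LaurentAlg n →ₗ[ℂ] LaurentAlg n) = D₂ :=
    AddMonoidAlgebra.lhom_ext' fun s => LinearMap.ext_ring (h s)
  exact Derivation.ext (LinearMap.congr_fun this)

theorem isWittFamily_of_apply_tmon
    {D : (Fin n → ℂ) → (Fin n → ℤ) → Derivation ℂ (LaurentAlg n) (LaurentAlg n)}
    (hD : ∀ u r s, D u r (tmon s) = ⟪u, s⟫ • tmon (r + s)) : IsWittFamily D where
  lie_eq u v r s := Derivation.ext_tmon fun t => by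
    rw [Derivation.commutator_apply, hD, hD, Derivation.map_smul, Derivation.map_smul, hD, hD, hD,
      smul_smul, smul_smul, ← add_assoc, add_left_comm, ← add_assoc, ← sub_smul]
    congr 1
    simp only [Pi.add_apply, Pi.sub_apply, Pi.smul_apply, smul_eq_mul, Int.cast_add, mul_add,
      sub_mul, Finset.sum_add_distrib, Finset.sum_sub_distrib, mul_assoc, ← Finset.mul_sum]
    ring
  isLinearMap r :=
    { map_add := fun u v => Derivation.ext_tmon fun s => by
        simp [hD, add_mul, Finset.sum_add_distrib, add_smul]
      map_smul := fun c u => Derivation.ext_tmon fun s => by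
        simp [hD, mul_assoc, ← Finset.mul_sum, smul_smul] }

end LaurentDerivations

/-- In the loop algebra `Der A ⊗ B` (realized as `B ⊗[ℂ] Der A`, with bracket
`[b ⊗ X, b' ⊗ Y] = bb' ⊗ [X,Y]`), the elements
`I(u,r,b₁,b₂) = ψ(b₁) D(u,r) ⊗ b₂ − D(u,0) ⊗ b₁b₂` satisfy
`[I(u,r,b₁,b₂), I(v,s,b₃,b₄)] = I(w, r+s, b₁b₃, b₂b₄) − (u,s) I(v,s, b₃, b₁b₂b₄)
  + (v,r) I(u,r, b₁, b₂b₃b₄)` with `w = (u,s)v − (v,r)u`; hence their span `D₂` is a Lie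
subalgebra of `Der A ⊗ B`. -/
theorem loop_I_bracket (n : ℕ) (B : Type*) [CommRing B] [Algebra ℂ B] (ψ : B →ₐ[ℂ] ℂ)
    (D : (Fin n → ℂ) → (Fin n → ℤ) → Derivation ℂ (LaurentAlg n) (LaurentAlg n))
    (hD : ∀ (u : Fin n → ℂ) (r s : Fin n → ℤ),
      D u r (tmon s) = (∑ i, u i * (s i : ℂ)) • tmon (r + s))
    (I : (Fin n → ℂ) → (Fin n → ℤ) → B → B →
      B ⊗[ℂ] Derivation ℂ (LaurentAlg n) (LaurentAlg n))
    (hI : ∀ u r b₁ b₂, I u r b₁ b₂ = ψ b₁ • (b₂ ⊗ₜ[ℂ] D u r) - (b₁ * b₂) ⊗ₜ[ℂ] D u 0) :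
    (∀ (u v : Fin n → ℂ) (r s : Fin n → ℤ) (b₁ b₂ b₃ b₄ : B),
      ⁅I u r b₁ b₂, I v s b₃ b₄⁆ =
        I ((∑ i, u i * (s i : ℂ)) • v - (∑ i, v i * (r i : ℂ)) • u) (r + s) (b₁ * b₃) (b₂ * b₄)
          - (∑ i, u i * (s i : ℂ)) • I v s b₃ (b₁ * b₂ * b₄)
          + (∑ i, v i * (r i : ℂ)) • I u r b₁ (b₂ * b₃ * b₄)) ∧
    (∀ x ∈ Submodule.span ℂ {z | ∃ u r b₁ b₂, z = I u r b₁ b₂},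
     ∀ y ∈ Submodule.span ℂ {z | ∃ u r b₁ b₂, z = I u r b₁ b₂},
      ⁅x, y⁆ ∈ Submodule.span ℂ {z | ∃ u r b₁ b₂, z = I u r b₁ b₂}) := by
  obtain rfl : I = loopI ψ D := by
    ext u r b₁ b₂
    exact hI u r b₁ b₂
  have hbracket := (isWittFamily_of_apply_tmon hD).lie_loopI ψ
  -- with `R` and `L` given, the span's `TensorProduct.instModule` unifies with the `LieAlgebra` one
  refine ⟨hbracket, fun x hx y hy => lie_mem_span_of_forall_lie_mem (R := ℂ)
    (L := B ⊗[ℂ] Derivation ℂ (LaurentAlg n) (LaurentAlg n)) ?_ hx hy⟩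
  rintro _ ⟨u, r, b₁, b₂, rfl⟩ _ ⟨v, s, b₃, b₄, rfl⟩
  rw [hbracket]
  refine add_mem (sub_mem ?_ (Submodule.smul_mem _ _ ?_)) (Submodule.smul_mem _ _ ?_) <;>
    exact Submodule.subset_span ⟨_, _, _, _, rfl⟩
end

section
/- Let ψ : B → ℂ be a unital algebra homomorphism with kernel M. Then the span D̃ of all elements ψ(b₁) D(u,r) ⊗ b₂ − D(u,r) ⊗ b₁b₂ (u ∈ ℂ^n, r ∈ ℤ^n, b₁,b₂ ∈ B) equals Der A ⊗ M, and is an ideal of the Lie algebra Der A ⊗ B. -/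
/-!
Since `ψ` is unital, `ψ b₁ • b₂ - b₁ b₂` lies in `M = ker ψ`, and conversely every `c ∈ M` has this
form (take `b₁ = c`, `b₂ = -1`). So `D̃` is spanned by the `c ⊗ D(u,r)` with `c ∈ M`, and as the
`D(u,r)` span `Der A` this is the span of `M ⊗ Der A`. That span is a Lie ideal because `M` is an
ideal of `B`: `⁅b' ⊗ Y, c ⊗ X⁆ = b'c ⊗ ⁅Y, X⁆`.
-/

open scoped TensorProduct

open Submodule TensorProduct

section

variable {R B : Type*} [CommRing R] [CommRing B] [Algebra R B]

theorem smul_tmul_sub_mul_tmul {L : Type*} [AddCommGroup L] [Module R L] (ψ : B →ₐ[R] R)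
    (b₁ b₂ : B) (X : L) :
    ψ b₁ • (b₂ ⊗ₜ[R] X) - (b₁ * b₂) ⊗ₜ[R] X = (ψ b₁ • b₂ - b₁ * b₂) ⊗ₜ[R] X := by
  rw [sub_tmul, smul_tmul']

theorem AlgHom.exists_smul_sub_mul_eq_iff_mem_ker (ψ : B →ₐ[R] R) (c : B) :
    (∃ b₁ b₂ : B, ψ b₁ • b₂ - b₁ * b₂ = c) ↔ c ∈ RingHom.ker (ψ : B →+* R) := by
  constructor
  · rintro ⟨b₁, b₂, rfl⟩
    simp [RingHom.mem_ker]
  · intro hc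
    refine ⟨c, -1, ?_⟩
    rw [RingHom.mem_ker] at hc
    simp [show ψ c = 0 from hc]

theorem span_image2_tmul_of_span_eq_top {M N : Type*} [AddCommGroup M] [Module R M]
    [AddCommGroup N] [Module R N] (T : Set M) {S : Set N} (hS : span R S = ⊤) :
    span R (Set.image2 (· ⊗ₜ[R] ·) T S) = span R (Set.image2 (· ⊗ₜ[R] ·) T Set.univ) := by
  have h := map₂_span_span R (TensorProduct.mk R M N)
  simp only [TensorProduct.mk_apply] at h
  rw [← h, ← h, hS, span_univ]

theorem lie_mem_span_image2_tmul_ideal {L : Type*} [LieRing L] [LieAlgebra R L] (I : Ideal B)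
    (y : B ⊗[R] L) {x : B ⊗[R] L} (hx : x ∈ span R (Set.image2 (· ⊗ₜ[R] ·) (I : Set B) Set.univ)) :
    ⁅y, x⁆ ∈ span R (Set.image2 (· ⊗ₜ[R] ·) (I : Set B) Set.univ) := by
  induction hx using span_induction with
  | mem x hx =>
    obtain ⟨c, hc, X, -, rfl⟩ := hx
    induction y using TensorProduct.induction_on with
    | zero => simp
    | tmul b Y =>
      rw [LieAlgebra.ExtendScalars.bracket_tmul]
      exact subset_span ⟨b * c, I.mul_mem_left b hc, ⁅Y, X⁆, trivial, rfl⟩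
    | add y₁ y₂ h₁ h₂ => rw [add_lie]; exact add_mem h₁ h₂
  | zero => simp
  | add x₁ x₂ _ _ h₁ h₂ => rw [lie_add]; exact add_mem h₁ h₂
  | smul a x _ h => rw [lie_smul]; exact smul_mem _ a h

end

theorem loop_Dtilde_eq_derA_tensor_M_general (n : ℕ) (B : Type*) [CommRing B] [Algebra ℂ B]
    (ψ : B →ₐ[ℂ] ℂ)
    (D : (Fin n → ℂ) → (Fin n → ℤ) → Derivation ℂ (LaurentAlg n) (LaurentAlg n))
    (hspan : Submodule.span ℂ {X | ∃ u r, X = D u r} = ⊤)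
    (Dtil : Submodule ℂ (B ⊗[ℂ] Derivation ℂ (LaurentAlg n) (LaurentAlg n)))
    (hDtil : Dtil = Submodule.span ℂ
      {z | ∃ u r b₁ b₂, z = ψ b₁ • (b₂ ⊗ₜ[ℂ] D u r) - (b₁ * b₂) ⊗ₜ[ℂ] D u r}) :
    Dtil = Submodule.span ℂ
        {z | ∃ b ∈ RingHom.ker (ψ : B →+* ℂ),
          ∃ X : Derivation ℂ (LaurentAlg n) (LaurentAlg n), z = b ⊗ₜ[ℂ] X} ∧
      ∀ x ∈ Dtil, ∀ y : B ⊗[ℂ] Derivation ℂ (LaurentAlg n) (LaurentAlg n), ⁅y, x⁆ ∈ Dtil := by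
  have hgen : {z | ∃ u r b₁ b₂, z = ψ b₁ • (b₂ ⊗ₜ[ℂ] D u r) - (b₁ * b₂) ⊗ₜ[ℂ] D u r} =
      Set.image2 (· ⊗ₜ[ℂ] ·) (RingHom.ker (ψ : B →+* ℂ) : Set B) {X | ∃ u r, X = D u r} := by
    ext z
    constructor
    · rintro ⟨u, r, b₁, b₂, rfl⟩
      exact ⟨_, (ψ.exists_smul_sub_mul_eq_iff_mem_ker _).1 ⟨b₁, b₂, rfl⟩, _, ⟨u, r, rfl⟩,
        (smul_tmul_sub_mul_tmul ψ b₁ b₂ _).symm⟩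
    · rintro ⟨c, hc, _, ⟨u, r, rfl⟩, rfl⟩
      obtain ⟨b₁, b₂, rfl⟩ := (ψ.exists_smul_sub_mul_eq_iff_mem_ker c).2 hc
      exact ⟨u, r, b₁, b₂, (smul_tmul_sub_mul_tmul ψ b₁ b₂ _).symm⟩
  have hM : {z | ∃ b ∈ RingHom.ker (ψ : B →+* ℂ),
      ∃ X : Derivation ℂ (LaurentAlg n) (LaurentAlg n), z = b ⊗ₜ[ℂ] X} =
      Set.image2 (· ⊗ₜ[ℂ] ·) (RingHom.ker (ψ : B →+* ℂ) : Set B) Set.univ := by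
    ext z
    simp [Set.mem_image2, eq_comm]
  subst hDtil
  rw [hgen, span_image2_tmul_of_span_eq_top _ hspan, hM]
  exact ⟨rfl, fun x hx y => lie_mem_span_image2_tmul_ideal _ y hx⟩

/-- Let `ψ : B → ℂ` be a unital algebra homomorphism with kernel `M`. In the
loop algebra `Der A ⊗ B` (realized as `B ⊗[ℂ] Der A`), the span `Dtil` of the elements
`ψ(b₁) D(u,r) ⊗ b₂ − D(u,r) ⊗ b₁b₂` equals `Der A ⊗ M` (the span of the `m ⊗ X` with
`m ∈ M`, `X ∈ Der A`), and `Dtil` is an ideal of `Der A ⊗ B`.  (The elements `D(u,r)` span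
`Der A`, which is recorded as the hypothesis `hspan`.) -/
theorem loop_Dtilde_eq_derA_tensor_M (n : ℕ) (B : Type*) [CommRing B] [Algebra ℂ B]
    (ψ : B →ₐ[ℂ] ℂ)
    (D : (Fin n → ℂ) → (Fin n → ℤ) → Derivation ℂ (LaurentAlg n) (LaurentAlg n))
    (hD : ∀ (u : Fin n → ℂ) (r s : Fin n → ℤ),
      D u r (tmon s) = (∑ i, u i * (s i : ℂ)) • tmon (r + s))
    (hspan : Submodule.span ℂ {X | ∃ u r, X = D u r} = ⊤)
    (Dtil : Submodule ℂ (B ⊗[ℂ] Derivation ℂ (LaurentAlg n) (LaurentAlg n)))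
    (hDtil : Dtil = Submodule.span ℂ
      {z | ∃ u r b₁ b₂, z = ψ b₁ • (b₂ ⊗ₜ[ℂ] D u r) - (b₁ * b₂) ⊗ₜ[ℂ] D u r}) :
    Dtil = Submodule.span ℂ
        {z | ∃ b ∈ RingHom.ker (ψ : B →+* ℂ),
          ∃ X : Derivation ℂ (LaurentAlg n) (LaurentAlg n), z = b ⊗ₜ[ℂ] X} ∧
      ∀ x ∈ Dtil, ∀ y : B ⊗[ℂ] Derivation ℂ (LaurentAlg n) (LaurentAlg n), ⁅y, x⁆ ∈ Dtil :=
  loop_Dtilde_eq_derA_tensor_M_general n B ψ D hspan Dtil hDtil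
end

section
/- In the semidirect product A ⋊ Der A with A = ℂ[t^{±1}], the elements (t−1)^k d_i (k ∈ ℕ, i ∈ ℤ, d_i = t^i·t d/dt) satisfy [(t−1)^k d_i, (t−1)^l d_j] = (l − k + j − i)(t−1)^{k+l} d_{i+j} + (l − k)(t−1)^{k+l−1} d_{i+j}. -/
/-!
Expanding `⁅a • D, b • E⁆ = (a * D b) • E - (b * E a) • D + (a * b) • ⁅D, E⁆` reduces the claim
to the relations `⁅d i, d j⁆ = (j - i) • d (i + j)`, `T m • d j = d (m + j)` and
`d i ((t - 1) ^ l) = l (t - 1) ^ (l - 1) t ^ (i + 1)`; writing `t ^ (i + 1) = t ^ i ((t - 1) + 1)`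
produces the term with `(t - 1) ^ (k + l - 1)`.
-/

open LaurentPolynomial

theorem Derivation.smul_lie_smul {R A : Type*} [CommRing R] [CommRing A] [Algebra R A]
    (a b : A) (D₁ D₂ : Derivation R A A) :
    ⁅a • D₁, b • D₂⁆ = (a * D₁ b) • D₂ - (b * D₂ a) • D₁ + (a * b) • ⁅D₁, D₂⁆ := by
  ext x
  simp only [Derivation.commutator_apply, Derivation.add_apply, Derivation.sub_apply,
    Derivation.smul_apply, smul_eq_mul, Derivation.leibniz]
  ring

theorem LaurentPolynomial.derivation_ext {R M : Type*} [CommSemiring R] [AddCommMonoid M]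
    [Module R M] [Module R[T;T⁻¹] M] [IsScalarTower R R[T;T⁻¹] M]
    {D₁ D₂ : Derivation R R[T;T⁻¹] M} (h : ∀ n, D₁ (T n) = D₂ (T n)) : D₁ = D₂ := by
  ext f
  induction f using LaurentPolynomial.induction_on' with
  | add p q hp hq => rw [map_add, map_add, hp, hq]
  | C_mul_T n a => rw [← smul_eq_C_mul, D₁.map_smul, D₂.map_smul, h]

theorem pow_mul_nsmul_pow_pred_mul_add_one {S : Type*} [CommSemiring S] (a : S) (m n : ℕ) :
    a ^ m * (n • a ^ (n - 1)) * (a + 1) = n • (a ^ (m + n) + a ^ (m + n - 1)) := by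
  cases n with
  | zero => simp
  | succ n => simp only [← add_assoc, Nat.add_one_sub_one]; ring

/-- `d m = t ^ m • t d/dt`, the standard basis of the Witt algebra `Der R[t^{±1}]`. -/
def IsWittFamily_s12 {R : Type*} [CommRing R] (d : ℤ → Derivation R R[T;T⁻¹] R[T;T⁻¹]) : Prop :=
  ∀ m s : ℤ, d m (T s) = (s : R) • T (m + s)

namespace IsWittFamily_s12

variable {R : Type*} [CommRing R] {d : ℤ → Derivation R R[T;T⁻¹] R[T;T⁻¹]}

theorem T_smul (hd : IsWittFamily_s12 d) (m j : ℤ) : (T m : R[T;T⁻¹]) • d j = d (m + j) := by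
  refine derivation_ext fun s => ?_
  rw [Derivation.smul_apply, hd, hd, smul_eq_mul, mul_smul_comm, ← T_add, add_assoc]

theorem lie (hd : IsWittFamily_s12 d) (i j : ℤ) : ⁅d i, d j⁆ = ((j : R) - i) • d (i + j) := by
  refine derivation_ext fun s => ?_
  simp only [Derivation.commutator_apply, Derivation.smul_apply, hd _ _, Derivation.map_smul,
    smul_smul]
  rw [← add_assoc, add_left_comm, ← add_assoc, ← sub_smul]
  congr 1
  push_cast
  ring

theorem pow_mul_apply_pow (hd : IsWittFamily_s12 d) (i : ℤ) (k l : ℕ) :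
    (T 1 - 1) ^ k * d i ((T 1 - 1) ^ l) =
      (l • ((T 1 - 1) ^ (k + l) + (T 1 - 1) ^ (k + l - 1))) * T i := by
  have h_sub_one : d i (T 1 - 1) = (T 1 - 1 + 1) * T i := by
    rw [map_sub, Derivation.map_one_eq_zero, sub_zero, hd, sub_add_cancel, ← T_add, add_comm]
    simp
  rw [Derivation.leibniz_pow, h_sub_one, ← pow_mul_nsmul_pow_pred_mul_add_one]
  simp only [smul_eq_mul, nsmul_eq_mul]
  ring

end IsWittFamily_s12

/-- In `Der ℂ[t^{±1}] ⊆ A ⋊ Der A`, the derivations `(t−1)^k d_i`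
(`d_i = t^i · t d/dt`, `d_i(t^s) = s t^{i+s}`) satisfy
`[(t−1)^k d_i, (t−1)^l d_j] = (l − k + j − i)(t−1)^{k+l} d_{i+j}
  + (l − k)(t−1)^{k+l−1} d_{i+j}`. -/
theorem one_var_tminus1_bracket
    (d : ℤ → Derivation ℂ (LaurentPolynomial ℂ) (LaurentPolynomial ℂ))
    (hd : ∀ m s : ℤ, d m (T s) = (s : ℂ) • T (m + s))
    (k l : ℕ) (i j : ℤ) :
    ⁅((T 1 - 1 : LaurentPolynomial ℂ)) ^ k • d i, ((T 1 - 1 : LaurentPolynomial ℂ)) ^ l • d j⁆ =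
      (((l : ℂ) - (k : ℂ) + (j : ℂ) - (i : ℂ)) • (((T 1 - 1 : LaurentPolynomial ℂ)) ^ (k + l) • d (i + j)))
        + (((l : ℂ) - (k : ℂ)) • (((T 1 - 1 : LaurentPolynomial ℂ)) ^ (k + l - 1) • d (i + j))) := by
  have hW : IsWittFamily_s12 d := hd
  rw [Derivation.smul_lie_smul, hW.pow_mul_apply_pow, hW.pow_mul_apply_pow, hW.lie,
    mul_smul, mul_smul, hW.T_smul, hW.T_smul, add_comm j i, add_comm l k, ← pow_add]
  module
end

section
/- In A ⋊ Der A with A = ℂ[t^{±1}], for all i ∈ ℤ and l ∈ ℕ the identity [(t−1)^{l+2} d_{−1}, (t−1) d_i] − [(t−1)^{l+1} d_{−1}, (t−1)² d_i] = −2 (t−1)^{l+2} d_i holds. -/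
/-!
Write `u = t - 1` and `D = d_{-1}`, so that `D u = 1` and `d_i = t^{i+1} D = (d_i u) D`. By
`[f D, g E] = f g [D, E] + f D(g) E - g E(f) D` the `[D, E]` terms of the two brackets cancel, and
the difference is `-u^{l+2} (E + (E u) D)` for any derivation `E`; for `E = d_i` this is
`-2 u^{l+2} d_i`.
-/

open LaurentPolynomial

namespace Derivation

variable {R A : Type*} [CommRing R] [CommRing A] [Algebra R A]

theorem smul_lie_smul_s15 (f g : A) (D E : Derivation R A A) :
    ⁅f • D, g • E⁆ = (f * g) • ⁅D, E⁆ + (f * D g) • E - (g * E f) • D := by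
  ext a
  simp only [commutator_apply, smul_apply, add_apply, sub_apply, smul_eq_mul, leibniz]
  ring

theorem lie_pow_smul_sub_lie_pow_smul {D E : Derivation R A A} {u : A} (hDu : D u = 1) (l : ℕ) :
    ⁅u ^ (l + 2) • D, u • E⁆ - ⁅u ^ (l + 1) • D, u ^ 2 • E⁆ =
      -(u ^ (l + 2) • (E + E u • D)) := by
  have hDu2 : D (u ^ 2) = 2 * u := by
    rw [leibniz_pow, hDu]
    simp only [smul_eq_mul, mul_one, nsmul_eq_mul]
    norm_num
  have hEpow (k : ℕ) : E (u ^ (k + 1)) = ((k + 1 : ℕ) : A) * u ^ k * E u := by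
    rw [leibniz_pow, Nat.add_sub_cancel, nsmul_eq_mul, smul_eq_mul, mul_assoc]
  rw [smul_lie_smul_s15, smul_lie_smul_s15, hDu, hDu2, hEpow (l + 1), hEpow l]
  match_scalars <;> ring

end Derivation

namespace LaurentPolynomial

variable {R : Type*} [CommRing R]

theorem derivation_ext_s15 {M : Type*} [AddCommGroup M] [Module R[T;T⁻¹] M] [Module R M]
    [IsScalarTower R R[T;T⁻¹] M] {D E : Derivation R R[T;T⁻¹] M}
    (h : ∀ n : ℤ, D (T n) = E (T n)) : D = E := by
  ext p
  induction p using LaurentPolynomial.induction_on' with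
  | add p q hp hq => rw [map_add, map_add, hp, hq]
  | C_mul_T n a => rw [← smul_eq_C_mul, D.map_smul, E.map_smul, h]

theorem T_smul_eq_of_apply_T {d : ℤ → Derivation R R[T;T⁻¹] R[T;T⁻¹]}
    (hd : ∀ m s : ℤ, d m (T s) = (s : R) • T (m + s)) (k m : ℤ) :
    (T k : R[T;T⁻¹]) • d m = d (k + m) :=
  derivation_ext_s15 fun s => by
    rw [Derivation.smul_apply, hd, hd, smul_comm, smul_eq_mul, ← T_add, add_assoc]

end LaurentPolynomial

/-- In `A ⋊ Der A` with `A = ℂ[t^{±1}]` (the computation takes place in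
`Der A`), for all `i ∈ ℤ` and `l ∈ ℕ`:
`[(t−1)^{l+2} d_{−1}, (t−1) d_i] − [(t−1)^{l+1} d_{−1}, (t−1)² d_i] = −2 (t−1)^{l+2} d_i`. -/
theorem one_var_special_bracket_identity
    (d : ℤ → Derivation ℂ (LaurentPolynomial ℂ) (LaurentPolynomial ℂ))
    (hd : ∀ m s : ℤ, d m (T s) = (s : ℂ) • T (m + s))
    (i : ℤ) (l : ℕ) :
    ⁅((T 1 - 1 : LaurentPolynomial ℂ)) ^ (l + 2) • d (-1),
        ((T 1 - 1 : LaurentPolynomial ℂ)) • d i⁆ -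
      ⁅((T 1 - 1 : LaurentPolynomial ℂ)) ^ (l + 1) • d (-1),
        ((T 1 - 1 : LaurentPolynomial ℂ)) ^ 2 • d i⁆ =
      (-2 : ℂ) • (((T 1 - 1 : LaurentPolynomial ℂ)) ^ (l + 2) • d i) := by
  have hD : d (-1) (T 1 - 1) = 1 := by simp [hd]
  have hE : d i (T 1 - 1) • d (-1) = d i := by
    rw [map_sub, Derivation.map_one_eq_zero, sub_zero, hd, Int.cast_one, one_smul,
      T_smul_eq_of_apply_T hd, add_neg_cancel_right]
  rw [Derivation.lie_pow_smul_sub_lie_pow_smul hD, hE, ← two_smul ℂ (d i), smul_comm _ (2 : ℂ)]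
  exact (neg_smul _ _).symm
end

section
/- Let V be a representation of A ⋊ Der A (A = ℂ[t^{±1}]) with associative A-action, and W = span{t^r v − v : v ∈ V, r ∈ ℤ}. Then W is invariant under the subalgebra T' = span{(t^r − 1)d : r ∈ ℤ}, so V/W is a T'-module. -/
open LaurentPolynomial

attribute [local instance 100] LieRing.ofAssociativeRing

/-!
Writing `W` as the span of the vectors `σ (t^r - 1) v`, the point is that the derivation
`D = (t^r - 1) d` maps each generator `t^s - 1` of the augmentation ideal back into its span:
`D (t^s - 1) = s ((t^{r+s} - 1) - (t^s - 1))`. The compatibility `[π D, σ a] = σ (D a)` then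
gives `π D (σ a v) = σ a (π D v) + σ (D a) v`, and both terms lie in `W` when `a = t^s - 1`.
-/

section ActionSpan

variable {R A V : Type*} [CommSemiring R] [Semiring A] [Algebra R A] [AddCommGroup V]
  [Module R V]

def actionSpan (σ : A →ₐ[R] Module.End R V) (S : Set A) : Submodule R V :=
  Submodule.span R {w | ∃ a ∈ S, ∃ v, w = σ a v}

theorem apply_mem_actionSpan_of_mem_span (σ : A →ₐ[R] Module.End R V) {S : Set A} {a : A}
    (ha : a ∈ Submodule.span R S) (v : V) : σ a v ∈ actionSpan σ S := by
  induction ha using Submodule.span_induction with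
  | mem a ha => exact Submodule.subset_span ⟨a, ha, v, rfl⟩
  | zero => simp
  | add a b _ _ ha hb =>
    rw [map_add, LinearMap.add_apply]
    exact add_mem ha hb
  | smul c a _ ha =>
    rw [map_smul, LinearMap.smul_apply]
    exact Submodule.smul_mem _ c ha

theorem actionSpan_le_comap (σ : A →ₐ[R] Module.End R V) (S : Set A) (X : Module.End R V)
    (δ : A →ₗ[R] A) (hX : ∀ a, X * σ a - σ a * X = σ (δ a))
    (hδ : ∀ a ∈ S, δ a ∈ Submodule.span R S) :
    actionSpan σ S ≤ (actionSpan σ S).comap X := by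
  refine Submodule.span_le.mpr ?_
  rintro _ ⟨a, ha, v, rfl⟩
  have hXa : X (σ a v) = σ a (X v) + σ (δ a) v := by
    rw [← hX, LinearMap.sub_apply, Module.End.mul_apply, Module.End.mul_apply,
      add_sub_cancel]
  rw [SetLike.mem_coe, Submodule.mem_comap, hXa]
  exact add_mem (Submodule.subset_span ⟨a, ha, X v, rfl⟩)
    (apply_mem_actionSpan_of_mem_span σ (hδ a ha) v)

end ActionSpan

theorem T_sub_one_smul_apply_T_sub_one {R : Type*} [CommRing R]
    (d0 : Derivation R (LaurentPolynomial R) (LaurentPolynomial R))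
    (hd0 : ∀ s : ℤ, d0 (T s) = (s : R) • T s) (r s : ℤ) :
    ((T r - 1 : LaurentPolynomial R) • d0) (T s - 1) =
      (s : R) • ((T (r + s) - 1) - (T s - 1)) := by
  rw [Derivation.smul_apply, map_sub, Derivation.map_one_eq_zero, sub_zero, hd0, smul_eq_mul,
    mul_smul_comm, sub_mul, one_mul, ← T_add, sub_sub_sub_cancel_right]

/-- Let `V` be a representation of `A ⋊ Der A` (`A = ℂ[t^{±1}]`), given by a
Lie algebra homomorphism `π : Der A → End(V)` and an associative unital action
`σ : A → End(V)` with the semidirect-product compatibility `[π(D), σ(a)] = σ(D a)`.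
Let `W = span{t^r v − v : v ∈ V, r ∈ ℤ}`.  Then `W` is invariant under the subalgebra
`T' = span{(t^r − 1)d : r ∈ ℤ}` (where `d(t^s) = s t^s`), so `V/W` is a `T'`-module. -/
theorem W_invariant_under_T'
    (V : Type*) [AddCommGroup V] [Module ℂ V]
    (π : Derivation ℂ (LaurentPolynomial ℂ) (LaurentPolynomial ℂ) →ₗ⁅ℂ⁆ Module.End ℂ V)
    (σ : LaurentPolynomial ℂ →ₐ[ℂ] Module.End ℂ V)
    (hcompat : ∀ (D : Derivation ℂ (LaurentPolynomial ℂ) (LaurentPolynomial ℂ))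
      (a : LaurentPolynomial ℂ), π D * σ a - σ a * π D = σ (D a))
    (d0 : Derivation ℂ (LaurentPolynomial ℂ) (LaurentPolynomial ℂ))
    (hd0 : ∀ s : ℤ, d0 (T s) = (s : ℂ) • T s)
    (W : Submodule ℂ V)
    (hW : W = Submodule.span ℂ {w | ∃ (v : V) (r : ℤ), w = σ (T r) v - v}) :
    ∀ r : ℤ, ∀ w ∈ W, π ((T r - 1 : LaurentPolynomial ℂ) • d0) w ∈ W := by
  intro r
  set S := Set.range fun s : ℤ => (T s - 1 : LaurentPolynomial ℂ)
  have hW_eq : W = actionSpan σ S := by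
    rw [hW, actionSpan]
    congr 1
    ext w
    simp only [S, Set.mem_ofPred_eq, Set.exists_range_iff, map_sub, map_one,
      LinearMap.sub_apply, Module.End.one_apply]
    exact exists_comm
  have hD : ∀ a ∈ S, ((T r - 1 : LaurentPolynomial ℂ) • d0) a ∈ Submodule.span ℂ S := by
    rintro _ ⟨s, rfl⟩
    rw [T_sub_one_smul_apply_T_sub_one d0 hd0]
    exact Submodule.smul_mem _ _ (sub_mem (Submodule.subset_span ⟨r + s, rfl⟩)
      (Submodule.subset_span ⟨s, rfl⟩))
  rw [hW_eq]
  exact fun w hw => actionSpan_le_comap σ S _ _ (hcompat _) hD hw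
end
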